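/- arXiv:0908.4064 — 5 statements merged into one kernel-verified Lean document; each statement's English description precedes it below -/
import Mathlib

section
/- An n×n matrix M over a (not necessarily commutative) ring is a Manin matrix (i.e. for every 2×2 submatrix with entries a,b,c,d one has ad−da = cb−bc, ac = ca, bd = db) if and only if it satisfies A·M⁽¹⁾·M⁽²⁾ = A·M⁽¹⁾·M⁽²⁾·A, where A = (1−P)/2 is the antisymmetrizer acting on ℂⁿ⊗ℂⁿ (P the permutation/swap operator), M⁽¹⁾ = M⊗1 and M⁽²⁾ = 1⊗M. -/
open Matrix

/-- `M` is a Manin matrix: the entries a,b,c,d of any 2×2 submatrix satisfy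
`ad − da = cb − bc`, and entries of the same column commute. -/
def IsManin {R : Type*} [Ring R] {n : ℕ} (M : Matrix (Fin n) (Fin n) R) : Prop :=
  (∀ i k j l : Fin n, i < k → j < l →
    M i j * M k l - M k l * M i j = M k j * M i l - M i l * M k j) ∧
  (∀ i k j : Fin n, M i j * M k j = M k j * M i j)

/-- M⁽¹⁾ = M ⊗ 1 on ℂⁿ ⊗ ℂⁿ. -/
def leg1 {R : Type*} [Ring R] {n : ℕ} (M : Matrix (Fin n) (Fin n) R) :
    Matrix (Fin n × Fin n) (Fin n × Fin n) R :=
  fun p q => if p.2 = q.2 then M p.1 q.1 else 0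

/-- M⁽²⁾ = 1 ⊗ M on ℂⁿ ⊗ ℂⁿ. -/
def leg2 {R : Type*} [Ring R] {n : ℕ} (M : Matrix (Fin n) (Fin n) R) :
    Matrix (Fin n × Fin n) (Fin n × Fin n) R :=
  fun p q => if p.1 = q.1 then M p.2 q.2 else 0

/-- The permutation (swap) operator P on ℂⁿ ⊗ ℂⁿ. -/
def swapMat (R : Type*) [Ring R] (n : ℕ) :
    Matrix (Fin n × Fin n) (Fin n × Fin n) R :=
  fun p q => if p.1 = q.2 ∧ p.2 = q.1 then 1 else 0

/-- The antisymmetrizer A = (1 − P)/2 on ℂⁿ ⊗ ℂⁿ. -/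
noncomputable def antisym2 (R : Type*) [Ring R] [Algebra ℚ R] (n : ℕ) :
    Matrix (Fin n × Fin n) (Fin n × Fin n) R :=
  ((2 : ℚ)⁻¹) • ((1 : Matrix (Fin n × Fin n) (Fin n × Fin n) R) - swapMat R n)

lemma leg_mul_apply {R : Type*} [Ring R] {n : ℕ} (M : Matrix (Fin n) (Fin n) R)
    (p q : Fin n × Fin n) :
    (leg1 M * leg2 M) p q = M p.1 q.1 * M p.2 q.2 := by
  simp [Matrix.mul_apply, leg1, leg2, Fintype.sum_prod_type, ite_and,
    Finset.sum_ite_eq, Finset.sum_ite_eq']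

lemma swap_mul_apply {R : Type*} [Ring R] {n : ℕ}
    (X : Matrix (Fin n × Fin n) (Fin n × Fin n) R) (p q : Fin n × Fin n) :
    (swapMat R n * X) p q = X (p.2, p.1) q := by
  simp [Matrix.mul_apply, swapMat, Fintype.sum_prod_type, ite_and,
    Finset.sum_ite_eq, Finset.sum_ite_eq']

lemma mul_swap_apply {R : Type*} [Ring R] {n : ℕ}
    (X : Matrix (Fin n × Fin n) (Fin n × Fin n) R) (p q : Fin n × Fin n) :
    (X * swapMat R n) p q = X p (q.2, q.1) := by
  simp [Matrix.mul_apply, swapMat, Fintype.sum_prod_type, ite_and,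
    Finset.sum_ite_eq, Finset.sum_ite_eq']

lemma B_apply {R : Type*} [Ring R] [Algebra ℚ R] {n : ℕ} (M : Matrix (Fin n) (Fin n) R)
    (p q : Fin n × Fin n) :
    (antisym2 R n * leg1 M * leg2 M) p q
      = (2:ℚ)⁻¹ • (M p.1 q.1 * M p.2 q.2 - M p.2 q.1 * M p.1 q.2) := by
  rw [mul_assoc, antisym2, Matrix.smul_mul, Matrix.sub_mul, Matrix.one_mul]
  rw [Matrix.smul_apply, Matrix.sub_apply, swap_mul_apply, leg_mul_apply, leg_mul_apply]

lemma BA_apply {R : Type*} [Ring R] [Algebra ℚ R] {n : ℕ} (M : Matrix (Fin n) (Fin n) R)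
    (p q : Fin n × Fin n) :
    (antisym2 R n * leg1 M * leg2 M * antisym2 R n) p q
      = (2:ℚ)⁻¹ • ((antisym2 R n * leg1 M * leg2 M) p q
          - (antisym2 R n * leg1 M * leg2 M) p (q.2, q.1)) := by
  conv_lhs => rw [antisym2, Matrix.mul_smul, Matrix.mul_sub, Matrix.mul_one]
  rw [Matrix.smul_apply, Matrix.sub_apply, mul_swap_apply, antisym2]

lemma scalar_iff {R : Type*} [Ring R] [Algebra ℚ R] (a a' : R) :
    ((2:ℚ)⁻¹ • a = (2:ℚ)⁻¹ • ((2:ℚ)⁻¹ • a - (2:ℚ)⁻¹ • a')) ↔ a + a' = 0 := by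
  constructor
  · intro h
    have h4 := congrArg (fun x : R => (4:ℚ) • x) h
    simp only [smul_sub, smul_smul] at h4
    norm_num at h4
    rw [two_smul, sub_eq_add_neg] at h4
    exact add_eq_zero_iff_eq_neg.mpr (add_left_cancel h4)
  · intro h
    have ha : a' = -a := eq_neg_of_add_eq_zero_right h
    subst ha
    module

lemma aux_group {G : Type*} [AddCommGroup G] (w x y z : G) :
    w - z = y - x ↔ (w - y) + (x - z) = 0 := by
  constructor
  · intro h
    have h0 : w - z - (y - x) = 0 := sub_eq_zero.mpr h
    calc (w - y) + (x - z) = w - z - (y - x) := by abel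
    _ = 0 := h0
  · intro h
    have h0 : w - z - (y - x) = 0 := by rw [← h]; abel
    exact sub_eq_zero.mp h0

lemma neg_flip {G : Type*} [AddCommGroup G] {x y z w : G} (h : x - y = z - w) :
    y - x = w - z := by
  have := congrArg Neg.neg h
  simpa [neg_sub] using this

lemma half_cancel {R : Type*} [Ring R] [Algebra ℚ R] {x : R} (h : x = -x) : x = 0 := by
  have h2 : (2:ℚ) • x = 0 := by
    rw [two_smul]
    nth_rewrite 1 [h]
    exact neg_add_cancel x
  have h3 := congrArg (fun y : R => (2⁻¹:ℚ) • y) h2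
  simpa [smul_smul] using h3

lemma manin_iff_Q {R : Type*} [Ring R] [Algebra ℚ R] {n : ℕ} (M : Matrix (Fin n) (Fin n) R) :
    IsManin M ↔ ∀ i k j l : Fin n,
      M i j * M k l - M k l * M i j = M k j * M i l - M i l * M k j := by
  constructor
  · rintro ⟨h1, h2⟩ i k j l
    rcases lt_trichotomy i k with hik | hik | hik
    · rcases lt_trichotomy j l with hjl | hjl | hjl
      · exact h1 i k j l hik hjl
      · subst hjl
        rw [sub_eq_zero.mpr (h2 i k j), sub_eq_zero.mpr (h2 k i j)]
      · exact (neg_flip (h1 i k l j hik hjl)).symm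
    · subst hik; rfl
    · rcases lt_trichotomy j l with hjl | hjl | hjl
      · exact (h1 k i j l hik hjl).symm
      · subst hjl
        rw [sub_eq_zero.mpr (h2 i k j), sub_eq_zero.mpr (h2 k i j)]
      · exact neg_flip (h1 k i l j hik hjl)
  · intro h
    refine ⟨fun i k j l _ _ => h i k j l, fun i k j => ?_⟩
    have e := h i k j j
    have hx : M i j * M k j - M k j * M i j = -(M i j * M k j - M k j * M i j) := by
      rw [neg_sub]; exact e
    have := half_cancel hx
    exact sub_eq_zero.mp this


/-- `M` is a Manin matrix iff `A·M⁽¹⁾·M⁽²⁾ = A·M⁽¹⁾·M⁽²⁾·A`. -/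
theorem manin_iff_antisym_relation {R : Type*} [Ring R] [Algebra ℚ R] {n : ℕ}
    (M : Matrix (Fin n) (Fin n) R) :
    IsManin M ↔
      antisym2 R n * leg1 M * leg2 M = antisym2 R n * leg1 M * leg2 M * antisym2 R n := by
  rw [manin_iff_Q, ← Matrix.ext_iff]
  constructor
  · intro h p q
    rw [BA_apply, B_apply, B_apply]
    exact (scalar_iff _ _).mpr ((aux_group _ _ _ _).mp (h p.1 p.2 q.1 q.2))
  · intro h i k j l
    have := h (i, k) (j, l)
    rw [BA_apply, B_apply, B_apply] at this
    exact (aux_group _ _ _ _).mpr ((scalar_iff _ _).mp this)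
end

section
/- If M is an n×n Manin matrix, then for every m the relation A_m·M⁽¹⁾·M⁽²⁾⋯M⁽ᵐ⁾ = A_m·M⁽¹⁾·M⁽²⁾⋯M⁽ᵐ⁾·A_m holds, where A_m = (1/m!)Σ_{σ∈S_m} sgn(σ)π(σ) is the antisymmetrizer on (ℂⁿ)^{⊗m} and M⁽ᵏ⁾ denotes M acting in the k-th tensor factor. -/
open Matrix

/-- `M` acting in the `k`-th tensor leg of (ℂⁿ)^{⊗m} (identity elsewhere). -/
def leg {R : Type*} [Ring R] {n m : ℕ} (M : Matrix (Fin n) (Fin n) R) (k : Fin m) :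
    Matrix (Fin m → Fin n) (Fin m → Fin n) R :=
  fun f g => if ∀ l, l ≠ k → f l = g l then M (f k) (g k) else 0

/-- Standard permutation representation of S_m on (ℂⁿ)^{⊗m}:
π(σ)(v₁⊗⋯⊗v_m) = v_{σ⁻¹(1)}⊗⋯⊗v_{σ⁻¹(m)}. -/
def permMat (R : Type*) [Ring R] (n : ℕ) {m : ℕ} (σ : Equiv.Perm (Fin m)) :
    Matrix (Fin m → Fin n) (Fin m → Fin n) R :=
  fun f g => if f = g ∘ ⇑σ⁻¹ then 1 else 0

/-- The antisymmetrizer A_m = (1/m!) Σ_{σ ∈ S_m} sgn(σ) π(σ) on (ℂⁿ)^{⊗m}. -/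
noncomputable def antisym (R : Type*) [Ring R] [Algebra ℚ R] (n m : ℕ) :
    Matrix (Fin m → Fin n) (Fin m → Fin n) R :=
  ((m.factorial : ℚ)⁻¹) •
    ∑ σ : Equiv.Perm (Fin m), ((Equiv.Perm.sign σ : ℤ) : ℚ) • permMat R n σ

/-- The ordered product M⁽¹⁾·M⁽²⁾⋯M⁽ᵐ⁾ on (ℂⁿ)^{⊗m}. -/
def legProd {R : Type*} [Ring R] {n : ℕ} (M : Matrix (Fin n) (Fin n) R) (m : ℕ) :
    Matrix (Fin m → Fin n) (Fin m → Fin n) R :=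
  (List.ofFn fun k : Fin m => leg M k).prod

/-!
Let `P` be the matrix of an adjacent transposition `(i i+1)` and `L = M⁽ⁱ⁾M⁽ⁱ⁺¹⁾`. The Manin
relations say exactly that `L (1 + P) = P L (1 + P)`. Since `P` commutes with all other legs and
`A P = -A`, the element `Z = A M⁽¹⁾⋯M⁽ᵐ⁾ (1 + P)` satisfies `Z = -Z`, hence `Z = 0` as `2` is
invertible. So `A M⁽¹⁾⋯M⁽ᵐ⁾` transforms by `sgn` under adjacent transpositions, hence under all of
`S_m`, which they generate; averaging over `S_m` gives `A M⁽¹⁾⋯M⁽ᵐ⁾ A = A M⁽¹⁾⋯M⁽ᵐ⁾`.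
-/

open Equiv Equiv.Perm

section PermMat

variable {R : Type*} [Ring R] {n m : ℕ}

lemma permMat_apply_eq_ite (σ : Perm (Fin m)) (f g : Fin m → Fin n) :
    permMat R n σ f g = if g = f ∘ σ then 1 else 0 := by
  have : f = g ∘ ⇑σ⁻¹ ↔ g = f ∘ σ := by
    constructor <;> rintro rfl <;> ext <;> simp
  simp only [permMat, this]

lemma permMat_mul_apply (σ : Perm (Fin m)) (X : Matrix (Fin m → Fin n) (Fin m → Fin n) R)
    (f g : Fin m → Fin n) : (permMat R n σ * X) f g = X (f ∘ σ) g := by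
  rw [Matrix.mul_apply]
  simp [permMat_apply_eq_ite]

lemma mul_permMat_apply (σ : Perm (Fin m)) (X : Matrix (Fin m → Fin n) (Fin m → Fin n) R)
    (f g : Fin m → Fin n) : (X * permMat R n σ) f g = X f (g ∘ ⇑σ⁻¹) := by
  rw [Matrix.mul_apply]
  simp [permMat]

lemma permMat_one : permMat R n (1 : Perm (Fin m)) = 1 := by
  ext f g
  rw [Matrix.one_apply]
  simp [permMat]

lemma permMat_mul (σ τ : Perm (Fin m)) :
    permMat R n (σ * τ) = permMat R n σ * permMat R n τ := by
  ext f g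
  simp only [permMat_mul_apply, permMat_apply_eq_ite, Perm.coe_mul]
  rfl

variable (R n m) in
def permRep : Perm (Fin m) →* Matrix (Fin m → Fin n) (Fin m → Fin n) R where
  toFun := permMat R n
  map_one' := permMat_one
  map_mul' := permMat_mul

lemma permMat_mul_leg (σ : Perm (Fin m)) (M : Matrix (Fin n) (Fin n) R) (k : Fin m) :
    permMat R n σ * leg M k = leg M (σ k) * permMat R n σ := by
  ext f g
  rw [permMat_mul_apply, mul_permMat_apply]
  have hcond : (∀ l, l ≠ k → f (σ l) = g l) ↔ ∀ l, l ≠ σ k → f l = g (σ⁻¹ l) := by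
    rw [σ.forall_congr_left]
    simp [Equiv.symm_apply_eq]
  simp [leg, hcond]

lemma commute_permMat_leg {σ : Perm (Fin m)} (M : Matrix (Fin n) (Fin n) R) {k : Fin m}
    (hk : σ k = k) : Commute (permMat R n σ) (leg M k) := by
  rw [Commute, SemiconjBy, permMat_mul_leg, hk]

end PermMat

section Antisymmetrizer

variable {R : Type*} [Ring R] [Algebra ℚ R] {n m : ℕ}

lemma intCast_sign_smul {M : Type*} [AddCommGroup M] [Module ℚ M] (σ : Perm (Fin m)) (x : M) :
    ((sign σ : ℤ) : ℚ) • x = sign σ • x := by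
  rw [Int.cast_smul_eq_zsmul, Units.smul_def]

lemma antisym_mul_permMat (τ : Perm (Fin m)) :
    antisym R n m * permMat R n τ = sign τ • antisym R n m := by
  have hterm : ∀ σ : Perm (Fin m), sign σ • permMat R n σ * permMat R n τ
      = sign τ • (sign (σ * τ) • permMat R n (σ * τ)) := by
    intro σ
    rw [smul_smul, Perm.sign_mul, mul_left_comm, Int.units_mul_self, mul_one, smul_mul_assoc,
      permMat_mul]
  simp only [antisym, intCast_sign_smul, smul_mul_assoc, Finset.sum_mul, hterm, ← Finset.smul_sum]
  rw [smul_comm]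
  congr 2
  exact Fintype.sum_equiv (Equiv.mulRight τ) _ _ fun _ => rfl

lemma mul_antisym_eq_self {X : Matrix (Fin m → Fin n) (Fin m → Fin n) R}
    (hX : ∀ σ, X * permMat R n σ = sign σ • X) : X * antisym R n m = X := by
  have hterm : ∀ σ : Perm (Fin m), X * (sign σ • permMat R n σ) = X := by
    intro σ
    rw [mul_smul_comm, hX, smul_smul, Int.units_mul_self, one_smul]
  simp only [antisym, intCast_sign_smul, mul_smul_comm, Finset.mul_sum, hterm, Finset.sum_const,
    Finset.card_univ, Fintype.card_perm, Fintype.card_fin]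
  rw [← Nat.cast_smul_eq_nsmul ℚ, smul_smul,
    inv_mul_cancel₀ (Nat.cast_ne_zero.mpr m.factorial_ne_zero), one_smul]

end Antisymmetrizer

lemma mul_map_eq_sign_smul_of_adjacent_swap {S : Type*} [Ring S] {m : ℕ}
    (ρ : Perm (Fin m) →* S) {X : S}
    (hX : ∀ i j : Fin m, (i : ℕ) + 1 = j → X * ρ (swap i j) = -X) (σ : Perm (Fin m)) :
    X * ρ σ = sign σ • X := by
  cases m with
  | zero => simp [Subsingleton.elim σ 1]
  | succ m =>
    have hσ : σ ∈ Submonoid.closure (Set.range fun i : Fin m => swap i.castSucc i.succ) := by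
      simp [mclosure_swap_castSucc_succ]
    induction hσ using Submonoid.closure_induction with
    | mem _ hτ =>
      obtain ⟨i, rfl⟩ := hτ
      rw [hX _ _ (by simp), sign_swap (Fin.castSucc_lt_succ (i := i)).ne, Units.neg_smul, one_smul]
    | one => simp
    | mul τ υ _ _ hτ hυ =>
      rw [map_mul, ← mul_assoc, hτ, smul_mul_assoc, hυ, smul_smul, Perm.sign_mul, mul_comm]

section Manin

variable {R : Type*} [Ring R] {n m : ℕ}

lemma IsManin.mul_add_mul_eq {M : Matrix (Fin n) (Fin n) R} (hM : IsManin M) (i k j l : Fin n) :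
    M i j * M k l + M i l * M k j = M k j * M i l + M k l * M i j := by
  wlog hik : i ≤ k generalizing i k
  · exact (this k i (le_of_not_ge hik)).symm
  wlog hjl : j ≤ l generalizing j l
  · rw [add_comm, add_comm (M k j * _)]
    exact this l j (le_of_not_ge hjl)
  rcases hik.eq_or_lt with rfl | hik
  · rfl
  rcases hjl.eq_or_lt with rfl | hjl
  · rw [hM.2 i k j]
  · exact sub_eq_sub_iff_add_eq_add.mp (hM.1 i k j l hik hjl)

lemma leg_mul_leg_apply (M : Matrix (Fin n) (Fin n) R) {a b : Fin m} (hab : a ≠ b)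
    (f g : Fin m → Fin n) :
    (leg M a * leg M b) f g =
      if ∀ l, l ≠ a → l ≠ b → f l = g l then M (f a) (g a) * M (f b) (g b) else 0 := by
  rw [Matrix.mul_apply, Finset.sum_eq_single (Function.update g b (f b))]
  · have hcond : (∀ l, l ≠ a → f l = Function.update g b (f b) l) ↔
        ∀ l, l ≠ a → l ≠ b → f l = g l := by
      refine forall_congr' fun l => ?_
      by_cases hl : l = b <;> simp [hl, hab.symm]
    have hb : ∀ l, l ≠ b → Function.update g b (f b) l = g l := fun l hl =>
      Function.update_of_ne hl _ _
    simp only [leg, if_pos hb, hcond, Function.update_of_ne hab, Function.update_self, ite_mul,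
      zero_mul]
  · intro h _ hne
    simp only [leg]
    split_ifs with hfh hhg
    · refine absurd (funext fun l => ?_) hne
      by_cases hl : l = b
      · subst hl; simp [hfh l hab.symm]
      · simp [hl, hhg l hl]
    all_goals simp
  · simp

lemma leg_mul_leg_mul_one_add_swap_apply (M : Matrix (Fin n) (Fin n) R) {a b : Fin m}
    (hab : a ≠ b) (f g : Fin m → Fin n) :
    (leg M a * leg M b * (1 + permMat R n (swap a b))) f g =
      if ∀ l, l ≠ a → l ≠ b → f l = g l then
        M (f a) (g a) * M (f b) (g b) + M (f a) (g b) * M (f b) (g a) else 0 := by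
  rw [mul_add, mul_one, Matrix.add_apply, mul_permMat_apply, swap_inv, leg_mul_leg_apply M hab,
    leg_mul_leg_apply M hab]
  split_ifs <;> simp_all +contextual [swap_apply_of_ne_of_ne]

lemma IsManin.leg_mul_leg_mul_one_add_swap {M : Matrix (Fin n) (Fin n) R} (hM : IsManin M)
    {a b : Fin m} (hab : a ≠ b) :
    leg M a * leg M b * (1 + permMat R n (swap a b)) =
      permMat R n (swap a b) * (leg M a * leg M b * (1 + permMat R n (swap a b))) := by
  ext f g
  rw [permMat_mul_apply, leg_mul_leg_mul_one_add_swap_apply M hab,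
    leg_mul_leg_mul_one_add_swap_apply M hab]
  have hcond : (∀ l, l ≠ a → l ≠ b → (f ∘ swap a b) l = g l) ↔
      ∀ l, l ≠ a → l ≠ b → f l = g l :=
    forall_congr' fun l => imp_congr_right fun ha => imp_congr_right fun hb => by
      rw [Function.comp_apply, swap_apply_of_ne_of_ne ha hb]
  refine if_congr hcond.symm ?_ rfl
  simpa using hM.mul_add_mul_eq (f a) (f b) (g a) (g b)

end Manin

lemma mul_sandwich_mul_eq_neg {S : Type*} [Ring S] [IsAddTorsionFree S] {A T L D P : S}
    (hA : A * P = -A) (hT : Commute P T) (hD : Commute P D)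
    (hL : L * (1 + P) = P * (L * (1 + P))) :
    A * (T * L * D) * P = -(A * (T * L * D)) := by
  set Z := A * (T * L * D) * (1 + P)
  have hZ : Z = A * T * (L * (1 + P)) * D := by
    simp only [Z, mul_assoc, ((Commute.one_left D).add_left hD).symm.eq]
  have hZneg : Z = -Z := by
    calc Z = A * T * (P * (L * (1 + P))) * D := by rw [hZ, ← hL]
      _ = A * P * T * (L * (1 + P)) * D := by simp only [mul_assoc, hT.eq]
      _ = -Z := by rw [hZ, hA]; noncomm_ring
  rw [← add_eq_zero_iff_eq_neg', ← mul_one_add]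
  exact self_eq_neg.mp hZneg

lemma List.prod_eq_prod_take_mul_mul_prod_drop {S : Type*} [Monoid S] (l : List S) {i : ℕ}
    (hi : i + 1 < l.length) :
    l.prod = (l.take i).prod * (l[i] * l[i + 1]) * (l.drop (i + 2)).prod := by
  rw [← l.prod_take_mul_prod_drop i, List.drop_eq_getElem_cons (by omega),
    List.drop_eq_getElem_cons (by omega)]
  simp only [List.prod_cons, mul_assoc]

lemma IsManin.antisym_mul_legProd_mul_swap {R : Type*} [Ring R] [Algebra ℚ R] {n m : ℕ}
    {M : Matrix (Fin n) (Fin n) R} (hM : IsManin M) {i j : Fin m} (hij : (i : ℕ) + 1 = j) :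
    antisym R n m * legProd M m * permMat R n (swap i j) = -(antisym R n m * legProd M m) := by
  have hne : i ≠ j := fun h => by simp [h] at hij
  have : IsAddTorsionFree (Matrix (Fin m → Fin n) (Fin m → Fin n) R) := .of_module_rat _
  set l := List.ofFn fun k : Fin m => leg M k
  have hcomm : ∀ k : Fin m, (k : ℕ) ≠ i → (k : ℕ) ≠ j →
      Commute (permMat R n (swap i j)) (leg M k) := fun k hi hj =>
    commute_permMat_leg M (swap_apply_of_ne_of_ne (Fin.val_ne_iff.mp hi) (Fin.val_ne_iff.mp hj))
  have hsplit : legProd M m = (l.take i).prod * (leg M i * leg M j) * (l.drop (i + 2)).prod := by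
    rw [legProd, List.prod_eq_prod_take_mul_mul_prod_drop _ (i := i) (by simp; omega)]
    simp [l, hij]
  rw [hsplit]
  refine mul_sandwich_mul_eq_neg ?_ ?_ ?_ (hM.leg_mul_leg_mul_one_add_swap hne)
  · rw [antisym_mul_permMat, sign_swap hne, Units.neg_smul, one_smul]
  · refine Commute.list_prod_right _ _ fun x hx => ?_
    obtain ⟨k, hk, rfl⟩ := List.mem_take_iff_getElem.mp hx
    simp only [l, List.getElem_ofFn]
    exact hcomm _ (by simp; omega) (by simp; omega)
  · refine Commute.list_prod_right _ _ fun x hx => ?_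
    obtain ⟨k, hk, rfl⟩ := List.mem_drop_iff_getElem.mp hx
    simp only [l, List.getElem_ofFn]
    exact hcomm _ (by simp; omega) (by simp; omega)

/-- for a Manin matrix M,
A_m·M⁽¹⁾⋯M⁽ᵐ⁾ = A_m·M⁽¹⁾⋯M⁽ᵐ⁾·A_m for every m. -/
theorem antisym_legProd_of_manin {R : Type*} [Ring R] [Algebra ℚ R] {n : ℕ}
    (M : Matrix (Fin n) (Fin n) R) (hM : IsManin M) (m : ℕ) :
    antisym R n m * legProd M m = antisym R n m * legProd M m * antisym R n m := by
  refine (mul_antisym_eq_self fun σ => ?_).symm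
  exact mul_map_eq_sign_smul_of_adjacent_swap (permRep R n m)
    (fun i j hij => hM.antisym_mul_legProd_mul_swap hij) σ
end

section
/- For a Manin matrix M, the column determinant is independent of the order of columns in the following sense: for any permutation τ ∈ S_n, Σ_{σ∈S_n} sgn(σ) M_{σ(τ(1)),τ(1)} M_{σ(τ(2)),τ(2)} ⋯ M_{σ(τ(n)),τ(n)} = sgn(τ)·0 + det_col M, i.e. the column-ordered expansion along the column order τ(1),…,τ(n) equals the usual column determinant det_col M for every τ. -/
open Matrix

/-- The column determinant Σ_σ sgn(σ) M_{σ(1),1}⋯M_{σ(n),n}. -/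
def cdet {R : Type*} [Ring R] {n : ℕ} (M : Matrix (Fin n) (Fin n) R) : R :=
  ∑ σ : Equiv.Perm (Fin n),
    (Equiv.Perm.sign σ : ℤ) • (List.ofFn fun j => M (σ j) j).prod

/-!
Adjacent transpositions generate `Sₙ`, so it suffices that exchanging two neighbouring columns
`p`, `q` in the multiplication order does not change the expansion. Pair each `σ` with
`σ * swap p q`: the sign flips, and the Manin relation for rows `σ p`, `σ q` and columns `p`, `q`
says that "new order minus old order" is the same for both, so the paired terms cancel.
-/

open Equiv

theorem List.prod_ofFn_eq_of_eq_of_ne_castSucc_succ {α : Type*} [Monoid α] {m : ℕ}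
    {f g : Fin (m + 1) → α} (i : Fin m)
    (hfg : ∀ k, k ≠ i.castSucc → k ≠ i.succ → g k = f k) :
    (ofFn g).prod =
      ((ofFn f).take i).prod * (g i.castSucc * g i.succ) * ((ofFn f).drop (i + 2)).prod := by
  have hsplit : ofFn g = (ofFn g).take i ++ g i.castSucc :: g i.succ :: (ofFn g).drop (i + 2) := by
    conv_lhs => rw [← take_append_drop i (ofFn g)]
    rw [drop_eq_getElem_cons (by simp), drop_eq_getElem_cons (by simp),
      List.getElem_ofFn, List.getElem_ofFn]
    rfl
  have htake : (ofFn g).take i = (ofFn f).take i := by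
    refine ext_getElem (by simp) fun k hk _ => ?_
    simp only [length_take, length_ofFn] at hk
    simp only [getElem_take, List.getElem_ofFn]
    exact hfg _ (Fin.ne_of_val_ne (by simp; omega)) (Fin.ne_of_val_ne (by simp; omega))
  have hdrop : (ofFn g).drop (i + 2) = (ofFn f).drop (i + 2) := by
    refine ext_getElem (by simp) fun k hk _ => ?_
    simp only [length_drop, length_ofFn] at hk
    simp only [getElem_drop, List.getElem_ofFn]
    exact hfg _ (Fin.ne_of_val_ne (by simp; omega)) (Fin.ne_of_val_ne (by simp; omega))
  rw [hsplit, htake, hdrop, prod_append, prod_cons, prod_cons, mul_assoc, mul_assoc]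

theorem List.prod_ofFn_sub_prod_ofFn_eq_of_eq_of_ne_castSucc_succ {R : Type*} [Ring R] {m : ℕ}
    {f g f' g' : Fin (m + 1) → R} (i : Fin m)
    (hg : ∀ k, k ≠ i.castSucc → k ≠ i.succ → g k = f k)
    (hf' : ∀ k, k ≠ i.castSucc → k ≠ i.succ → f' k = f k)
    (hg' : ∀ k, k ≠ i.castSucc → k ≠ i.succ → g' k = f k)
    (h : f i.castSucc * f i.succ - g i.castSucc * g i.succ =
      f' i.castSucc * f' i.succ - g' i.castSucc * g' i.succ) :
    (ofFn f).prod - (ofFn g).prod = (ofFn f').prod - (ofFn g').prod := by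
  rw [prod_ofFn_eq_of_eq_of_ne_castSucc_succ i (fun _ _ _ => rfl),
    prod_ofFn_eq_of_eq_of_ne_castSucc_succ i hg, prod_ofFn_eq_of_eq_of_ne_castSucc_succ i hf',
    prod_ofFn_eq_of_eq_of_ne_castSucc_succ i hg', ← sub_mul, ← sub_mul, ← mul_sub, ← mul_sub,
    h]

section

variable {R : Type*} [Ring R] {n : ℕ} {M : Matrix (Fin n) (Fin n) R}

theorem IsManin.mul_sub_mul_eq (hM : IsManin M) (x y c d : Fin n) :
    M x c * M y d - M y d * M x c = M y c * M x d - M x d * M y c := by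
  rcases lt_trichotomy c d with hcd | rfl | hcd
  · rcases lt_trichotomy x y with hxy | rfl | hxy
    · exact hM.1 x y c d hxy hcd
    · rfl
    · exact (hM.1 y x c d hxy hcd).symm
  · rw [hM.2 x y c]
  · rcases lt_trichotomy x y with hxy | rfl | hxy
    · rw [← neg_sub, ← hM.1 x y d c hxy hcd, neg_sub]
    · rfl
    · rw [← neg_sub, hM.1 y x d c hxy hcd, neg_sub]

def columnExpansion (M : Matrix (Fin n) (Fin n) R) (τ : Perm (Fin n)) : R :=
  ∑ σ : Perm (Fin n), (Perm.sign σ : ℤ) • (List.ofFn fun k => M (σ (τ k)) (τ k)).prod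

theorem IsManin.columnExpansion_mul_swap {m : ℕ} {M : Matrix (Fin (m + 1)) (Fin (m + 1)) R}
    (hM : IsManin M) (ρ : Perm (Fin (m + 1))) (i : Fin m) :
    columnExpansion M (ρ * swap i.castSucc i.succ) = columnExpansion M ρ := by
  set p := ρ i.castSucc with hp
  set q := ρ i.succ with hq
  have hpq : p ≠ q := ρ.injective.ne Fin.castSucc_lt_succ.ne
  have hs : ∀ k, k ≠ i.castSucc → k ≠ i.succ → swap i.castSucc i.succ k = k :=
    fun k => swap_apply_of_ne_of_ne
  have ht : ∀ k, k ≠ i.castSucc → k ≠ i.succ → swap p q (ρ k) = ρ k :=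
    fun k h₁ h₂ => swap_apply_of_ne_of_ne (ρ.injective.ne h₁) (ρ.injective.ne h₂)
  have hpair : ∀ σ : Perm (Fin (m + 1)),
      (List.ofFn fun k => M (σ ((ρ * swap i.castSucc i.succ) k))
            ((ρ * swap i.castSucc i.succ) k)).prod
        - (List.ofFn fun k => M (σ (ρ k)) (ρ k)).prod
      = (List.ofFn fun k => M ((σ * swap p q) ((ρ * swap i.castSucc i.succ) k))
            ((ρ * swap i.castSucc i.succ) k)).prod
        - (List.ofFn fun k => M ((σ * swap p q) (ρ k)) (ρ k)).prod := by
    intro σ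
    refine List.prod_ofFn_sub_prod_ofFn_eq_of_eq_of_ne_castSucc_succ i
      (fun k h₁ h₂ => ?_) (fun k h₁ h₂ => ?_) (fun k h₁ h₂ => ?_) ?_
    · simp only [Perm.mul_apply, hs k h₁ h₂]
    · simp only [Perm.mul_apply, hs k h₁ h₂, ht k h₁ h₂]
    · simp only [Perm.mul_apply, hs k h₁ h₂, ht k h₁ h₂]
    · simpa only [Perm.mul_apply, ← hp, ← hq, swap_apply_left, swap_apply_right] using
        hM.mul_sub_mul_eq (σ q) (σ p) q p
  rw [columnExpansion, columnExpansion, ← sub_eq_zero, ← Finset.sum_sub_distrib]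
  refine Finset.sum_ninvolution (· * swap p q) (fun σ => ?_)
    (fun σ _ h => hpq (swap_eq_one_iff.mp (mul_left_cancel (h.trans (mul_one σ).symm))))
    (fun _ => Finset.mem_univ _) (fun σ => by simp only [mul_assoc, Equiv.swap_mul_self, mul_one])
  rw [Perm.sign_mul, Perm.sign_swap hpq, ← smul_sub, ← smul_sub, hpair σ]
  simp

end

/-- for a Manin matrix the column determinant does not depend on
the order of the columns: expanding along the column order τ(1),…,τ(n) gives
the usual column determinant, for every permutation τ. -/
theorem cdet_column_order_independent {R : Type*} [Ring R] {n : ℕ}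
    (M : Matrix (Fin n) (Fin n) R) (hM : IsManin M) (τ : Equiv.Perm (Fin n)) :
    (∑ σ : Equiv.Perm (Fin n),
        (Equiv.Perm.sign σ : ℤ) • (List.ofFn fun k => M (σ (τ k)) (τ k)).prod)
      = cdet M := by
  change columnExpansion M τ = columnExpansion M 1
  cases n with
  | zero => rw [Subsingleton.elim τ 1]
  | succ m =>
    induction τ using Submonoid.induction_of_closure_eq_top_right
      (Perm.mclosure_swap_castSucc_succ m) with
    | one => rfl
    | mul_right ρ _ hs ih =>
      obtain ⟨i, rfl⟩ := hs
      rw [hM.columnExpansion_mul_swap, ih]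
end

section
/- For an n×n Manin matrix M and indices 1 ≤ k₁ < k₂ < ⋯ < k_m ≤ n, one has tr_{1,…,n}(A_n M^{(k₁)} M^{(k₂)} ⋯ M^{(k_m)}) = tr_{1,…,n}(A_n M⁽¹⁾ M⁽²⁾ ⋯ M⁽ᵐ⁾) = (m!(n−m)!/n!) · tr_{1,…,m}(A_m M⁽¹⁾ ⋯ M⁽ᵐ⁾). -/
open Matrix

/-!
Expanding `A_N = (1/N!) Σ_σ sgn σ · π(σ)`, the trace becomes
`(1/N!) Σ_g Σ_σ sgn σ · L (g ∘ σ) g` over basis tuples `g : Fin N → Fin n`, where `L` is the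
product of the legs. When `g` is not injective the `σ`-sum cancels in pairs `σ ↔ swap p q * σ`.
When `g` is injective, `L (g ∘ σ) g` vanishes unless `σ` fixes every position outside the chosen
legs `k`, so `σ` is really a permutation of the `m` legs and the `σ`-sum is the column determinant
of `M` restricted to rows and columns `g ∘ k`. Every embedding `Fin m ↪ Fin n` extends to exactly
`(n - m).descFactorial (N - m)` embeddings `g` along `k`, so the trace does not depend on `k`, and
comparing the cases `N = n` and `N = m` gives the constant `m! (n - m)! / n!`.
-/

open Equiv Finset Function

theorem sum_sign_smul_comp_eq_zero_of_not_injective {α β M : Type*} [Fintype α] [DecidableEq α]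
    [AddCommGroup M] (Ψ : (α → β) → M) {g : α → β} (hg : ¬ Injective g) :
    ∑ σ : Perm α, (Perm.sign σ : ℤ) • Ψ (g ∘ σ) = 0 := by
  obtain ⟨p, q, hpq, hne⟩ : ∃ p q, g p = g q ∧ p ≠ q := by
    simpa [Injective] using hg
  have hswap : g ∘ swap p q = g := by
    funext x
    rw [Function.comp_apply, swap_apply_def]
    split_ifs <;> simp_all
  refine sum_ninvolution (swap p q * ·) (fun σ => ?_) (fun σ _ => ?_)
    (fun _ => mem_univ _) (swap_mul_self_mul p q)
  · rw [Perm.coe_mul, ← comp_assoc, hswap, Perm.sign_mul, Perm.sign_swap hne]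
    simp
  · simpa [swap_eq_refl_iff] using hne

theorem Function.Embedding.sum_trans_eq_descFactorial_smul {α β γ M : Type*} [Fintype α]
    [Fintype β] [Fintype γ] [AddCommMonoid M] (k : α ↪ β) (F : (α ↪ γ) → M) :
    ∑ g : β ↪ γ, F (k.trans g)
      = (Fintype.card γ - Fintype.card α).descFactorial (Fintype.card β - Fintype.card α) •
          ∑ f : α ↪ γ, F f := by
  classical
  let e : β ≃ α ⊕ ↥(Set.range k)ᶜ :=
    (sumCompl (· ∈ Set.range k)).symm.trans
      (sumCongr (ofInjective k k.injective).symm (Equiv.refl _))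
  let Φ := (embeddingCongr e (Equiv.refl γ)).trans sumEmbeddingEquivSigmaEmbeddingRestricted
  have hΦ : ∀ g, (Φ g).1 = k.trans g := fun _ => rfl
  rw [← Fintype.sum_equiv Φ.symm (fun x => F x.1) _ (fun x => by rw [← hΦ, Φ.apply_symm_apply]),
    Fintype.sum_sigma]
  simp only [sum_const, card_univ, Fintype.card_embedding_eq, Fintype.card_compl_set,
    Fintype.card_range, smul_sum]

section

variable {R : Type*} [Ring R] {n N m : ℕ}

theorem trace_permMat_mul (σ : Perm (Fin N)) (L : Matrix (Fin N → Fin n) (Fin N → Fin n) R) :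
    trace (permMat R n σ * L) = ∑ g, L (g ∘ σ) g := by
  have hσ : ∀ g h : Fin N → Fin n, g = h ∘ ⇑σ.symm ↔ h = g ∘ σ := fun g h => by
    constructor <;> rintro rfl <;> ext <;> simp
  simp only [trace, Matrix.diag, mul_apply, permMat, Perm.inv_def, ite_mul, one_mul, zero_mul, hσ,
    sum_ite_eq', mem_univ, if_true]

theorem trace_antisym_mul [Algebra ℚ R] (L : Matrix (Fin N → Fin n) (Fin N → Fin n) R) :
    trace (antisym R n N * L)
      = (N.factorial : ℚ)⁻¹ • ∑ σ : Perm (Fin N), (Perm.sign σ : ℤ) • ∑ g, L (g ∘ σ) g := by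
  simp only [antisym, smul_mul_assoc, sum_mul, trace_smul, trace_sum, trace_permMat_mul,
    Int.cast_smul_eq_zsmul]

theorem trace_antisym_mul_eq_sum_embedding [Algebra ℚ R]
    (L : Matrix (Fin N → Fin n) (Fin N → Fin n) R) :
    trace (antisym R n N * L)
      = (N.factorial : ℚ)⁻¹ • ∑ g : Fin N ↪ Fin n,
          ∑ σ : Perm (Fin N), (Perm.sign σ : ℤ) • L (g ∘ σ) g := by
  rw [trace_antisym_mul]
  congr 1
  simp_rw [smul_sum]
  rw [sum_comm]
  refine (Fintype.sum_of_injective (fun g : Fin N ↪ Fin n => (g : Fin N → Fin n))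
    Embedding.coe_injective _ _ (fun g hg => ?_) fun _ => rfl).symm
  exact sum_sign_smul_comp_eq_zero_of_not_injective (L · g) fun hinj => hg ⟨⟨g, hinj⟩, rfl⟩

theorem leg_mul_apply_s9 (M : Matrix (Fin n) (Fin n) R) (j : Fin N)
    (L : Matrix (Fin N → Fin n) (Fin N → Fin n) R) (f g : Fin N → Fin n) :
    (leg M j * L) f g = ∑ x, M (f j) x * L (update f j x) g := by
  rw [mul_apply]
  refine (Fintype.sum_of_injective (update f j) (update_injective f j) _ _
    (fun h hh => ?_) fun x => ?_).symm
  · have : ¬ ∀ l, l ≠ j → f l = h l := fun hfh => hh ⟨h j, funext fun l => by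
      by_cases hl : l = j
      · subst hl; simp
      · rw [update_of_ne hl, hfh l hl]⟩
    rw [leg, if_neg this, zero_mul]
  · rw [leg, if_pos (fun l hl => (update_of_ne hl _ _).symm), update_self]

theorem forall_notMem_range_succ_update_eq_iff {k : Fin (m + 1) → Fin N} (hk : Injective k)
    (f g : Fin N → Fin n) (x : Fin n) :
    (∀ l ∉ Set.range fun i : Fin m => k i.succ, update f (k 0) x l = g l)
      ↔ x = g (k 0) ∧ ∀ l ∉ Set.range k, f l = g l := by
  have h0 : k 0 ∉ Set.range fun i : Fin m => k i.succ := by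
    rintro ⟨i, hi⟩; exact Fin.succ_ne_zero i (hk hi)
  simp only [Fin.range_fin_succ k, Fin.tail_def, Set.mem_insert_iff, not_or]
  constructor
  · intro h
    refine ⟨by simpa using h (k 0) h0, fun l ⟨hl0, hl⟩ => ?_⟩
    simpa [update_of_ne hl0] using h l hl
  · rintro ⟨rfl, h⟩ l hl
    by_cases hl0 : l = k 0
    · subst hl0; simp
    · rw [update_of_ne hl0]; exact h l ⟨hl0, hl⟩

theorem prod_leg_apply (M : Matrix (Fin n) (Fin n) R) (k : Fin m → Fin N) (hk : Injective k)
    (f g : Fin N → Fin n) :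
    (List.ofFn fun i => leg M (k i)).prod f g
      = if ∀ l ∉ Set.range k, f l = g l
        then (List.ofFn fun i => M (f (k i)) (g (k i))).prod else 0 := by
  induction m generalizing f with
  | zero => simp [one_apply, funext_iff]
  | succ m ih =>
    have htail := ih (fun i => k i.succ) (hk.comp (Fin.succ_injective m))
    have hne : ∀ i : Fin m, k i.succ ≠ k 0 := fun i => hk.ne (Fin.succ_ne_zero i)
    simp only [List.ofFn_succ, List.prod_cons, leg_mul_apply_s9, htail,
      forall_notMem_range_succ_update_eq_iff hk]
    simp only [update_apply, hne, if_false]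
    by_cases hC : ∀ l ∉ Set.range k, f l = g l
    · simp only [eq_true hC, and_true, if_true, mul_ite, mul_zero, sum_ite_eq', mem_univ]
    · simp only [eq_false hC, and_false, if_false, mul_zero, sum_const_zero]

/-- Column determinant: the factors of each term are taken in column order (`R` is not
commutative). -/
def colDet (A : Matrix (Fin m) (Fin m) R) : R :=
  ∑ τ : Perm (Fin m), (Perm.sign τ : ℤ) • (List.ofFn fun i => A (τ i) i).prod

theorem sum_sign_smul_prod_leg_apply_comp (M : Matrix (Fin n) (Fin n) R) (k : Fin m → Fin N)
    (hk : Injective k) {g : Fin N → Fin n} (hg : Injective g) :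
    ∑ σ : Perm (Fin N), (Perm.sign σ : ℤ) • (List.ofFn fun i => leg M (k i)).prod (g ∘ σ) g
      = colDet (M.submatrix (g ∘ k) (g ∘ k)) := by
  let E : Perm (Fin m) ≃ {σ : Perm (Fin N) // ∀ a, a ∉ Set.range k → σ a = a} :=
    (ofInjective k hk).permCongr.trans (Perm.subtypeEquivSubtypePerm _)
  have hE : ∀ τ i, (E τ : Perm (Fin N)) (k i) = k (τ i) := fun τ i => by
    simp [E, Perm.ofSubtype_apply_of_mem _ (Set.mem_range_self i), permCongr_apply]
  have hsign : ∀ τ, Perm.sign (E τ : Perm (Fin N)) = Perm.sign τ := fun τ => by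
    simp [E, Perm.sign_ofSubtype, Perm.sign_permCongr]
  simp_rw [prod_leg_apply M k hk, Function.comp_apply, hg.eq_iff]
  refine (Fintype.sum_of_injective (fun τ => (E τ : Perm (Fin N)))
    (Subtype.val_injective.comp E.injective) _ _ (fun σ hσ => ?_) fun τ => ?_).symm
  · rw [if_neg, smul_zero]
    exact fun h => hσ ⟨E.symm ⟨σ, h⟩, by simp⟩
  · rw [if_pos (E τ).2, hsign]
    simp [hE]

theorem trace_antisym_mul_prod_leg [Algebra ℚ R] (M : Matrix (Fin n) (Fin n) R)
    (k : Fin m → Fin N) (hk : Injective k) :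
    trace (antisym R n N * (List.ofFn fun i => leg M (k i)).prod)
      = ((n - m).descFactorial (N - m) / N.factorial : ℚ) •
          ∑ f : Fin m ↪ Fin n, colDet (M.submatrix f f) := by
  rw [trace_antisym_mul_eq_sum_embedding]
  simp_rw [sum_sign_smul_prod_leg_apply_comp M k hk (Embedding.injective _)]
  have hcount := Embedding.sum_trans_eq_descFactorial_smul ⟨k, hk⟩
    fun f : Fin m ↪ Fin n => colDet (M.submatrix f f)
  simp only [Embedding.coe_trans, Embedding.coeFn_mk, Fintype.card_fin] at hcount
  rw [hcount, ← Nat.cast_smul_eq_nsmul ℚ, smul_smul, div_eq_inv_mul]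

end

theorem trace_antisym_legs_choice_general {R : Type*} [Ring R] [Algebra ℚ R] {n m : ℕ}
    (M : Matrix (Fin n) (Fin n) R) (hmn : m ≤ n)
    (k : Fin m → Fin n) (hk : StrictMono k) :
    Matrix.trace (antisym R n n * (List.ofFn fun i : Fin m => leg M (k i)).prod)
      = Matrix.trace (antisym R n n *
          (List.ofFn fun i : Fin m => leg M (Fin.castLE hmn i)).prod) ∧
    Matrix.trace (antisym R n n *
        (List.ofFn fun i : Fin m => leg M (Fin.castLE hmn i)).prod)
      = ((m.factorial * (n - m).factorial : ℚ) / (n.factorial : ℚ)) •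
          Matrix.trace (antisym R n m * legProd M m) := by
  have hm : trace (antisym R n m * legProd M m)
      = ((n - m).descFactorial (m - m) / m.factorial : ℚ) •
          ∑ f : Fin m ↪ Fin n, colDet (M.submatrix f f) :=
    trace_antisym_mul_prod_leg M id injective_id
  refine ⟨by rw [trace_antisym_mul_prod_leg M k hk.injective,
    trace_antisym_mul_prod_leg M _ (Fin.castLE_injective hmn)], ?_⟩
  rw [trace_antisym_mul_prod_leg M _ (Fin.castLE_injective hmn), hm, smul_smul, Nat.sub_self,
    Nat.descFactorial_zero, Nat.descFactorial_self]
  congr 1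
  push_cast
  field_simp

/-- for a Manin matrix M and 1 ≤ k₁ < ⋯ < k_m ≤ n,
tr_{1,…,n}(A_n M^{(k₁)}⋯M^{(k_m)}) = tr_{1,…,n}(A_n M⁽¹⁾⋯M⁽ᵐ⁾)
  = (m!(n−m)!/n!) · tr_{1,…,m}(A_m M⁽¹⁾⋯M⁽ᵐ⁾). -/
theorem trace_antisym_legs_choice {R : Type*} [Ring R] [Algebra ℚ R] {n m : ℕ}
    (M : Matrix (Fin n) (Fin n) R) (hM : IsManin M) (hmn : m ≤ n)
    (k : Fin m → Fin n) (hk : StrictMono k) :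
    Matrix.trace (antisym R n n * (List.ofFn fun i : Fin m => leg M (k i)).prod)
      = Matrix.trace (antisym R n n *
          (List.ofFn fun i : Fin m => leg M (Fin.castLE hmn i)).prod) ∧
    Matrix.trace (antisym R n n *
        (List.ofFn fun i : Fin m => leg M (Fin.castLE hmn i)).prod)
      = ((m.factorial * (n - m).factorial : ℚ) / (n.factorial : ℚ)) •
          Matrix.trace (antisym R n m * legProd M m) :=
  trace_antisym_legs_choice_general M hmn k hk
end

section
/- If a matrix of the form M = 1 + εN over the ring R[ε]/(ε³) is a Manin matrix (where N has entries in R), then N is a Manin matrix over R. -/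
open Matrix

noncomputable section

/-- The truncated polynomial ring R[ε]/(ε³), realized as the quotient of the
(noncommutative-coefficient) polynomial ring R[X] by the relation X³ = 0. -/
abbrev EpsRing (R : Type*) [Ring R] : Type _ :=
  RingQuot (fun a b : Polynomial R => a = Polynomial.X ^ 3 ∧ b = 0)

/-- The canonical inclusion R → R[ε]/(ε³). -/
def toEps (R : Type*) [Ring R] : R →+* EpsRing R :=
  (RingQuot.mkRingHom _).comp Polynomial.C

/-- The central nilpotent element ε ∈ R[ε]/(ε³). -/
def eps (R : Type*) [Ring R] : EpsRing R :=
  RingQuot.mkRingHom _ Polynomial.X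

namespace ManinAux

variable {R : Type*} [Ring R]

/-- The nilpotent shift matrix. -/
def J (R : Type*) [Ring R] : Matrix (Fin 3) (Fin 3) R := !![0,1,0;0,0,1;0,0,0]

lemma comm_J (a : R) : Commute (Matrix.scalar (Fin 3) a) (J R) := by
  show _ = _
  ext i j
  fin_cases i <;> fin_cases j <;>
    simp [J, Matrix.mul_apply, Fin.sum_univ_three, Matrix.scalar_apply, Matrix.vecHead,
      Matrix.vecTail]

lemma J_pow : (J R) ^ 3 = 0 := by
  ext i j
  fin_cases i <;> fin_cases j <;>
    simp [J, pow_succ, Matrix.mul_apply, Fin.sum_univ_three, Matrix.vecHead, Matrix.vecTail]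

/-- Evaluation of a polynomial at the shift matrix. -/
def φ : Polynomial R →+* Matrix (Fin 3) (Fin 3) R :=
  Polynomial.eval₂RingHom' (Matrix.scalar (Fin 3)) (J R) comm_J

lemma φ_X : φ (Polynomial.X : Polynomial R) = J R := by simp [φ]

lemma φ_C (a : R) : φ (Polynomial.C a) = Matrix.scalar (Fin 3) a := by simp [φ]

/-- Descent of `φ` to the truncated polynomial ring. -/
def Φ : EpsRing R →+* Matrix (Fin 3) (Fin 3) R :=
  RingQuot.lift ⟨φ, by rintro x y ⟨rfl, rfl⟩; simp [map_pow, φ_X, J_pow]⟩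

lemma Φ_toEps (a : R) : Φ (toEps R a) = Matrix.scalar (Fin 3) a := by
  simp [Φ, toEps, RingQuot.lift_mkRingHom_apply, φ_C]

lemma Φ_eps : Φ (eps R) = J R := by
  simp [Φ, eps, RingQuot.lift_mkRingHom_apply, φ_X]

lemma Φ_entry (p : Prop) [Decidable p] (a : R) :
    Φ ((if p then (1 : EpsRing R) else 0) + eps R * toEps R a) =
      !![(if p then 1 else 0), a, 0; 0, (if p then 1 else 0), a;
         0, 0, (if p then 1 else 0)] := by
  rw [map_add, _root_.map_mul, Φ_eps, Φ_toEps, apply_ite Φ, _root_.map_one, _root_.map_zero]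
  ext i j
  fin_cases i <;> fin_cases j <;> split_ifs <;>
    simp [J, Matrix.mul_apply, Fin.sum_univ_three, Matrix.scalar_apply, Matrix.one_apply,
      Matrix.vecHead, Matrix.vecTail]

lemma mul02 (d d' a b : R) :
    ((!![d, a, 0; 0, d, a; 0, 0, d] : Matrix (Fin 3) (Fin 3) R) *
      !![d', b, 0; 0, d', b; 0, 0, d']) 0 2 = a * b := by
  simp [Matrix.mul_apply, Fin.sum_univ_three, Matrix.vecHead, Matrix.vecTail]

end ManinAux

/-- if 1 + εN is a Manin matrix over R[ε]/(ε³) then N is a Manin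
matrix over R. -/
theorem manin_of_one_add_eps {R : Type*} [Ring R] {n : ℕ}
    (N : Matrix (Fin n) (Fin n) R)
    (h : IsManin (Matrix.of fun i j : Fin n =>
      (if i = j then (1 : EpsRing R) else 0) + eps R * toEps R (N i j))) :
    IsManin N := by
  obtain ⟨h1, h2⟩ := h
  constructor
  · intro i k j l hik hjl
    have := congrArg (fun x => (ManinAux.Φ x) 0 2) (h1 i k j l hik hjl)
    simpa only [Matrix.of_apply, map_sub, _root_.map_mul, ManinAux.Φ_entry, Matrix.sub_apply,
      ManinAux.mul02] using this
  · intro i k j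
    have := congrArg (fun x => (ManinAux.Φ x) 0 2) (h2 i k j)
    simpa only [Matrix.of_apply, _root_.map_mul, ManinAux.Φ_entry, ManinAux.mul02] using this

end
end
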